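/- Let d ≥ 1, L > 0, τ ∈ (0,1), and let D be a finite nonempty list of pairs (x, y) ∈ ℝ^d × {0,1} such that: (1) ‖x − x'‖₂ ≤ τ²/(128L) for all (x,y), (x',y') ∈ D; (2) there is an L-Lipschitz function f⋆ : ℝ^d → ℝ with |f⋆(x)| ≥ τ for every (x,y) ∈ D and with f⋆(x̃) < 0 for some (x̃, ỹ) ∈ D; (3) the empirical mean of the labels satisfies (1/|D|)·Σ_{(x,y)∈D} y ≤ 1/4 + μ(−τ)/2. Then every minimizer f̂ of the cross-entropy loss L(· | D) over the class of all L-Lipschitz functions ℝ^d → ℝ satisfies f̂(x) < 0 for all (x, y) ∈ D. -/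

import Mathlib

/-- The logistic function `μ(z) = exp(z) / (1 + exp(z))`. -/
noncomputable def logistic (z : ℝ) : ℝ := Real.exp z / (1 + Real.exp z)

/-- `f : ℝ^d → ℝ` is `L`-Lipschitz: `|f x − f x'| ≤ L ‖x − x'‖₂` for all `x, x'`. -/
def LipschitzCst {d : ℕ} (L : ℝ) (f : EuclideanSpace ℝ (Fin d) → ℝ) : Prop :=
  ∀ x x' : EuclideanSpace ℝ (Fin d), |f x - f x'| ≤ L * ‖x - x'‖

/-- The cross-entropy loss of `f` on the list of labeled points `D`:
`L(f | D) = Σ_{(x,y)∈D} −y·log(μ(f x)) − (1−y)·log(1 − μ(f x))`. -/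
noncomputable def ceLoss {d : ℕ} (f : EuclideanSpace ℝ (Fin d) → ℝ)
    (D : List (EuclideanSpace ℝ (Fin d) × ℝ)) : ℝ :=
  (D.map fun p =>
    -p.2 * Real.log (logistic (f p.1)) - (1 - p.2) * Real.log (1 - logistic (f p.1))).sum

lemma logistic_neg_eq (t : ℝ) : logistic (-t) = 1 / (1 + Real.exp t) := by
  have h := Real.exp_pos t
  rw [logistic, Real.exp_neg]
  rw [div_eq_div_iff (by positivity) (by positivity)]
  field_simp
  ring

lemma logistic_cubic {t : ℝ} (ht : 0 < t) (ht1 : t < 1) :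
    logistic (-t) ≤ 1 / 2 - t / 4 + t ^ 3 / 24 := by
  have hq : 1 + t + t ^ 2 / 2 + t ^ 3 / 6 ≤ Real.exp t := by
    have h := Real.sum_le_exp_of_nonneg ht.le 4
    simp [Finset.sum_range_succ, Nat.factorial] at h
    nlinarith [h]
  have hc : (0:ℝ) ≤ 1 / 2 - t / 4 + t ^ 3 / 24 := by nlinarith
  rw [logistic_neg_eq]
  rw [div_le_iff₀ (by positivity)]
  have h1 : (1:ℝ) ≤ (1 / 2 - t / 4 + t ^ 3 / 24) * (1 + (1 + t + t ^ 2 / 2 + t ^ 3 / 6)) := by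
    nlinarith [pow_pos ht 3, pow_pos ht 5, pow_pos ht 6]
  have h2 := mul_le_mul_of_nonneg_left (by linarith : 1 + (1 + t + t ^ 2 / 2 + t ^ 3 / 6) ≤ 1 + Real.exp t) hc
  linarith

lemma softplus_neg_bound {t : ℝ} (ht : 0 < t) (ht1 : t < 1) :
    Real.log (1 + Real.exp (-(t / 2))) ≤ Real.log 2 - t / 4 + (5 / 9) * (t / 4) ^ 2 := by
  set x := t / 4 with hx
  have hx0 : 0 < x := by positivity
  have hx4 : x ≤ 1 / 4 := by rw [hx]; linarith
  have hb1 := Real.exp_bound (x := x) (by rw [abs_of_pos hx0]; linarith) (n := 3) (by norm_num)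
  have hb2 := Real.exp_bound (x := -x) (by rw [abs_neg, abs_of_pos hx0]; linarith) (n := 3) (by norm_num)
  simp [Finset.sum_range_succ, Nat.factorial, abs_neg, abs_of_pos hx0] at hb1 hb2
  have h1 : Real.exp x ≤ 1 + x + x ^ 2 / 2 + (2 / 9) * x ^ 3 := by
    have := abs_sub_le_iff.1 hb1
    nlinarith [this.1]
  have h2 : Real.exp (-x) ≤ 1 - x + x ^ 2 / 2 + (2 / 9) * x ^ 3 := by
    have := abs_sub_le_iff.1 hb2
    nlinarith [this.1]
  have hsum : Real.exp x + Real.exp (-x) ≤ 2 + (10 / 9) * x ^ 2 := by nlinarith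
  have e1 : Real.exp x * Real.exp (-x) = 1 := by rw [← Real.exp_add]; simp
  have e2 : Real.exp (-x) * Real.exp (-x) = Real.exp (-(t / 2)) := by
    rw [← Real.exp_add]; congr 1; rw [hx]; ring
  have hprod : 1 + Real.exp (-(t / 2)) = (Real.exp x + Real.exp (-x)) * Real.exp (-x) := by
    rw [add_mul, e1, e2]
  have hle : 1 + Real.exp (-(t / 2)) ≤ (2 + (10 / 9) * x ^ 2) * Real.exp (-x) := by
    rw [hprod]
    exact mul_le_mul_of_nonneg_right hsum (Real.exp_pos _).le
  calc Real.log (1 + Real.exp (-(t / 2)))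
      ≤ Real.log ((2 + (10 / 9) * x ^ 2) * Real.exp (-x)) :=
        Real.log_le_log (by positivity) hle
    _ = Real.log 2 + Real.log (1 + (5 / 9) * x ^ 2) - x := by
        rw [show (2:ℝ) + (10 / 9) * x ^ 2 = 2 * (1 + (5 / 9) * x ^ 2) by ring,
          Real.log_mul (by positivity) (Real.exp_ne_zero _),
          Real.log_mul (by norm_num) (by positivity), Real.log_exp]
        ring
    _ ≤ Real.log 2 - t / 4 + (5 / 9) * (t / 4) ^ 2 := by
        have := Real.log_le_sub_one_of_pos (x := 1 + (5 / 9) * x ^ 2) (by positivity)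
        rw [← hx]
        linarith

lemma key_scalar {t : ℝ} (ht : 0 < t) (ht1 : t < 1) :
    Real.log (1 + Real.exp (-(t / 2))) + (t / 2) * (1 / 4 + logistic (-t) / 2) + t ^ 2 / 64
      < Real.log 2 := by
  have h1 := softplus_neg_bound ht ht1
  have h2 := logistic_cubic ht ht1
  have h3 : (t / 2) * (1 / 4 + logistic (-t) / 2)
      ≤ (t / 2) * (1 / 4 + (1 / 2 - t / 4 + t ^ 3 / 24) / 2) := by
    apply mul_le_mul_of_nonneg_left _ (by positivity)
    linarith
  have ht2 : t ^ 2 < 1 := by nlinarith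
  have ht4 : t ^ 4 ≤ t ^ 2 := by nlinarith [pow_pos ht 2]
  nlinarith [pow_pos ht 2]


lemma one_add_exp_pos (z : ℝ) : 0 < 1 + Real.exp z := by positivity

lemma ce_term (y z : ℝ) :
    -y * Real.log (logistic z) - (1 - y) * Real.log (1 - logistic z)
      = Real.log (1 + Real.exp z) - y * z := by
  have hz := one_add_exp_pos z
  have h1 : Real.log (logistic z) = z - Real.log (1 + Real.exp z) := by
    rw [logistic, Real.log_div (Real.exp_ne_zero z) (ne_of_gt hz), Real.log_exp]
  have h2 : (1 : ℝ) - logistic z = (1 + Real.exp z)⁻¹ := by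
    rw [logistic]; field_simp; ring
  rw [h1, h2, Real.log_inv]; ring

lemma ceLoss_eq {d : ℕ} (f : EuclideanSpace ℝ (Fin d) → ℝ)
    (D : List (EuclideanSpace ℝ (Fin d) × ℝ)) :
    ceLoss f D = (D.map fun p => Real.log (1 + Real.exp (f p.1)) - p.2 * f p.1).sum := by
  unfold ceLoss
  exact congrArg List.sum (List.map_congr_left fun p _ => ce_term p.2 (f p.1))

lemma softplus_lip (z w : ℝ) :
    Real.log (1 + Real.exp z) ≤ Real.log (1 + Real.exp w) + |z - w| := by
  have h1 : 1 + Real.exp z ≤ Real.exp |z - w| * (1 + Real.exp w) := by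
    have e1 : (1:ℝ) ≤ Real.exp |z - w| := Real.one_le_exp (abs_nonneg _)
    have e2 : Real.exp z ≤ Real.exp |z - w| * Real.exp w := by
      rw [← Real.exp_add]
      exact Real.exp_le_exp.2 (by linarith [le_abs_self (z - w)])
    nlinarith [Real.exp_pos w]
  calc Real.log (1 + Real.exp z) ≤ Real.log (Real.exp |z - w| * (1 + Real.exp w)) :=
        Real.log_le_log (one_add_exp_pos z) h1
    _ = Real.log (1 + Real.exp w) + |z - w| := by
        rw [Real.log_mul (Real.exp_ne_zero _) (ne_of_gt (one_add_exp_pos w)), Real.log_exp]; ring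

lemma softplus_ge (z : ℝ) : Real.log 2 + z / 2 ≤ Real.log (1 + Real.exp z) := by
  have h1 : 2 * Real.exp (z / 2) ≤ 1 + Real.exp z := by
    have h2 : Real.exp z = Real.exp (z / 2) * Real.exp (z / 2) := by
      rw [← Real.exp_add]; ring_nf
    nlinarith [sq_nonneg (Real.exp (z / 2) - 1)]
  calc Real.log 2 + z / 2 = Real.log (2 * Real.exp (z / 2)) := by
        rw [Real.log_mul two_ne_zero (Real.exp_ne_zero _), Real.log_exp]
    _ ≤ Real.log (1 + Real.exp z) := Real.log_le_log (by positivity) h1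

lemma sum_affine {α : Type*} (D : List (α × ℝ)) (A B : ℝ) :
    (D.map fun p => A + B * p.2).sum = A * D.length + B * (D.map Prod.snd).sum := by
  induction D with
  | nil => simp
  | cons h t ih => simp [ih]; ring


/-- Lemma 3 of the paper: if all points of the dataset `D` are within distance
`τ²/(128L)` of each other, the labels are generated consistently with an `L`-Lipschitz
model `f⋆` with gap `τ` that is negative at some point of `D`, and the empirical label
mean is at most `1/4 + μ(−τ)/2`, then every minimizer of the cross-entropy loss over the
class of `L`-Lipschitz functions is negative on all of `D`. -/
theorem stmt_2 (d : ℕ) (hd : 1 ≤ d) (L τ : ℝ) (hL : 0 < L) (hτ : τ ∈ Set.Ioo (0 : ℝ) 1)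
    (D : List (EuclideanSpace ℝ (Fin d) × ℝ)) (hne : D ≠ [])
    (hlab : ∀ p ∈ D, p.2 = 0 ∨ p.2 = 1)
    (hdiam : ∀ p ∈ D, ∀ q ∈ D, ‖p.1 - q.1‖ ≤ τ ^ 2 / (128 * L))
    (fstar : EuclideanSpace ℝ (Fin d) → ℝ) (hfstar : LipschitzCst L fstar)
    (hgap : ∀ p ∈ D, τ ≤ |fstar p.1|)
    (hpos : ∃ p ∈ D, fstar p.1 < 0)
    (hmean : (D.map Prod.snd).sum / D.length ≤ 1 / 4 + logistic (-τ) / 2)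
    (fhat : EuclideanSpace ℝ (Fin d) → ℝ) (hfhat : LipschitzCst L fhat)
    (hmin : ∀ g : EuclideanSpace ℝ (Fin d) → ℝ, LipschitzCst L g → ceLoss fhat D ≤ ceLoss g D) :
    ∀ p ∈ D, fhat p.1 < 0 := by
  obtain ⟨ht0, ht1⟩ := hτ
  by_contra hcon
  push_neg at hcon
  obtain ⟨p₀, hp₀D, hz₀⟩ := hcon
  set z₀ := fhat p₀.1 with hz₀def
  set n : ℝ := (D.length : ℝ) with hndef
  set S : ℝ := (D.map Prod.snd).sum with hSdef
  have hn : 0 < n := by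
    have h : 0 < D.length := List.length_pos_iff.mpr hne
    rw [hndef]
    exact_mod_cast h
  -- label sum bound
  have hSb : S ≤ n * (1 / 4 + logistic (-τ) / 2) := by
    rw [div_le_iff₀ hn] at hmean
    linarith [hmean]
  have hμ : logistic (-τ) < 1 / 2 := by
    have hE : Real.exp (-τ) < 1 := Real.exp_lt_one_iff.mpr (by linarith)
    rw [logistic, div_lt_iff₀ (one_add_exp_pos _)]
    nlinarith [Real.exp_pos (-τ)]
  have hShalf : S ≤ n / 2 := by nlinarith
  -- the constant competitor
  set c : ℝ := -(τ / 2) with hcdef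
  have hlipg : LipschitzCst L (fun _ : EuclideanSpace ℝ (Fin d) => c) := by
    intro x x'
    simp only [sub_self, abs_zero]
    positivity
  have hgloss : ceLoss (fun _ : EuclideanSpace ℝ (Fin d) => c) D = Real.log (1 + Real.exp c) * n + (τ / 2) * S := by
    rw [ceLoss_eq]
    have : (D.map fun p => Real.log (1 + Real.exp c) - p.2 * c)
        = D.map fun p => Real.log (1 + Real.exp c) + (τ / 2) * p.2 := by
      apply List.map_congr_left
      intro p _
      rw [hcdef]; ring
    rw [this, sum_affine]
  -- lower bound for the loss of fhat
  have ha : (0:ℝ) ≤ τ ^ 2 / 128 := by positivity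
  have key1 : ∀ p ∈ D,
      (Real.log (1 + Real.exp z₀) - 2 * (τ ^ 2 / 128)) + (-z₀) * p.2
        ≤ Real.log (1 + Real.exp (fhat p.1)) - p.2 * fhat p.1 := by
    intro p hp
    have hd1 : |fhat p.1 - z₀| ≤ τ ^ 2 / 128 := by
      calc |fhat p.1 - z₀| ≤ L * ‖p.1 - p₀.1‖ := hfhat p.1 p₀.1
        _ ≤ L * (τ ^ 2 / (128 * L)) :=
            mul_le_mul_of_nonneg_left (hdiam p hp p₀ hp₀D) hL.le
        _ = τ ^ 2 / 128 := by field_simp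
    have h1 : Real.log (1 + Real.exp z₀)
        ≤ Real.log (1 + Real.exp (fhat p.1)) + τ ^ 2 / 128 := by
      have := softplus_lip z₀ (fhat p.1)
      rw [abs_sub_comm] at this
      linarith
    have h2 : p.2 * fhat p.1 ≤ p.2 * z₀ + τ ^ 2 / 128 := by
      rcases hlab p hp with hy | hy
      · rw [hy]; simpa using ha
      · rw [hy]
        have := abs_le.1 hd1
        linarith [this.2]
    linarith
  have hlow : Real.log (1 + Real.exp z₀) * n - 2 * (τ ^ 2 / 128) * n - z₀ * S
      ≤ ceLoss fhat D := by
    rw [ceLoss_eq]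
    have hs := List.sum_le_sum key1
    rw [sum_affine] at hs
    rw [← hndef, ← hSdef] at hs
    linarith
  -- chain of bounds
  have hb1 : n * Real.log 2 - n * (τ ^ 2 / 64) ≤ ceLoss fhat D := by
    have hsp := softplus_ge z₀
    have hzS : 0 ≤ z₀ * (n / 2 - S) := mul_nonneg hz₀ (by linarith)
    nlinarith
  -- strict upper bound for competitor loss
  have hkey : Real.log (1 + Real.exp (-(τ / 2))) + (τ / 2) * (1 / 4 + logistic (-τ) / 2)
      + τ ^ 2 / 64 < Real.log 2 := key_scalar ht0 ht1
  have hmin' := hmin (fun _ : EuclideanSpace ℝ (Fin d) => c) hlipg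
  rw [hgloss] at hmin'
  have hup : Real.log (1 + Real.exp c) * n + (τ / 2) * S
      < n * Real.log 2 - n * (τ ^ 2 / 64) := by
    have hS2 : (τ / 2) * S ≤ (τ / 2) * (n * (1 / 4 + logistic (-τ) / 2)) :=
      mul_le_mul_of_nonneg_left hSb (by positivity)
    have := mul_lt_mul_of_pos_left hkey hn
    rw [hcdef]
    nlinarith
  linarith
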